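/- arXiv:1407.1447 — 2 statements merged into one kernel-verified Lean document; each statement's English description precedes it below -/
import Mathlib

section
/- Let G be a nonzero squarefree homogeneous polynomial of degree 6 in two variables x₁, x₂ over ℂ (a binary sextic with six distinct roots in ℙ¹(ℂ)). Then the following are equivalent: (i) there exists an invertible 2×2 complex matrix M that is not a scalar multiple of the identity, with M² a scalar multiple of the identity (so M induces a nontrivial involution of ℙ¹(ℂ)), and a nonzero constant c ∈ ℂ such that G composed with the linear change of variables M equals c·G (i.e. the involution stabilizes the root set of G); (ii) there exist linearly independent linear forms u₁, u₂ in x₁, x₂ and constants c₁, c₂, c₃, c₄ ∈ ℂ such that G = c₁u₁⁶ + c₂u₁⁴u₂² + c₃u₁²u₂⁴ + c₄u₂⁶. -/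
open Matrix

namespace PascalStmt

noncomputable section

open MvPolynomial

/-- Membership in the conic `K = {y : y₀y₂ = y₁²}`. -/
def OnK (y : Fin 3 → ℂ) : Prop := y 0 * y 2 = y 1 ^ 2

/-- The tangent line to `K` at a point `y` of `K`. -/
def tangentK (y : Fin 3 → ℂ) : Fin 3 → ℂ := ![y 2, -(2 * y 1), y 0]

/-- First cross-hair point of the array `[[P₁,P₂,P₃],[P₄,P₅,P₆]]`. -/
def chX1 (P₁ P₂ P₃ P₄ P₅ P₆ : Fin 3 → ℂ) : Fin 3 → ℂ := (P₁ ⨯₃ P₅) ⨯₃ (P₂ ⨯₃ P₄)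

/-- Second cross-hair point of the array `[[P₁,P₂,P₃],[P₄,P₅,P₆]]`. -/
def chX2 (P₁ P₂ P₃ P₄ P₅ P₆ : Fin 3 → ℂ) : Fin 3 → ℂ := (P₁ ⨯₃ P₆) ⨯₃ (P₃ ⨯₃ P₄)

/-- Third cross-hair point of the array `[[P₁,P₂,P₃],[P₄,P₅,P₆]]`. -/
def chX3 (P₁ P₂ P₃ P₄ P₅ P₆ : Fin 3 → ℂ) : Fin 3 → ℂ := (P₂ ⨯₃ P₆) ⨯₃ (P₃ ⨯₃ P₅)

/-- The Pascal line vector of the array `[[P₁,P₂,P₃],[P₄,P₅,P₆]]`. -/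
def pascalVec (P₁ P₂ P₃ P₄ P₅ P₆ : Fin 3 → ℂ) : Fin 3 → ℂ :=
  chX1 P₁ P₂ P₃ P₄ P₅ P₆ ⨯₃ chX2 P₁ P₂ P₃ P₄ P₅ P₆

/-- Six points, pairwise non-proportional (in particular all nonzero). -/
def PairwiseNonProp (P : Fin 6 → (Fin 3 → ℂ)) : Prop :=
  ∀ i j, i ≠ j → ∀ c : ℂ, P i ≠ c • P j


abbrev P2 := MvPolynomial (Fin 2) ℂ

/-- substitution by matrix -/
noncomputable def subst (N : Matrix (Fin 2) (Fin 2) ℂ) : P2 →ₐ[ℂ] P2 :=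
  MvPolynomial.aeval fun i => ∑ j : Fin 2, MvPolynomial.C (N i j) * MvPolynomial.X j

lemma subst_X (N : Matrix (Fin 2) (Fin 2) ℂ) (i : Fin 2) :
    subst N (X i) = ∑ j : Fin 2, C (N i j) * X j := by
  simp [subst]

lemma subst_C (N : Matrix (Fin 2) (Fin 2) ℂ) (a : ℂ) : subst N (C a) = C a := by
  simp [subst, algebraMap_eq]

lemma subst_subst (N M : Matrix (Fin 2) (Fin 2) ℂ) (p : P2) :
    subst N (subst M p) = subst (M * N) p := by
  have h : (subst N).comp (subst M) = subst (M * N) := by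
    apply MvPolynomial.algHom_ext
    intro i
    simp only [AlgHom.comp_apply, subst_X, map_sum, _root_.map_mul, subst_C,
      Matrix.mul_apply]
    simp_rw [Finset.mul_sum, Finset.sum_mul]
    rw [Finset.sum_comm]
    refine Finset.sum_congr rfl fun k _ => Finset.sum_congr rfl fun j _ => by ring
  calc subst N (subst M p) = ((subst N).comp (subst M)) p := rfl
    _ = subst (M * N) p := by rw [h]

lemma subst_one (p : P2) : subst 1 p = p := by
  have h : subst (1 : Matrix (Fin 2) (Fin 2) ℂ) = AlgHom.id ℂ P2 := by
    apply MvPolynomial.algHom_ext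
    intro i
    simp [subst_X, Matrix.one_apply]
  rw [h]; rfl

lemma subst_isHomogeneous (N : Matrix (Fin 2) (Fin 2) ℂ) {p : P2} {n : ℕ}
    (hp : p.IsHomogeneous n) : (subst N p).IsHomogeneous n := by
  have h2 : ∀ i : Fin 2, (∑ j : Fin 2, C (N i j) * X j : P2).IsHomogeneous 1 :=
    fun i => IsHomogeneous.sum _ _ _ fun j _ => isHomogeneous_C_mul_X _ _
  have := hp.eval₂ (n := 1) (algebraMap ℂ P2) (fun i => ∑ j : Fin 2, C (N i j) * X j)
    (fun r => by simpa [algebraMap_eq] using isHomogeneous_C (Fin 2) (R := ℂ) r) h2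
  rw [one_mul] at this
  exact this

/-- the exponent finsupp (a, b) -/
noncomputable def mexp (a b : ℕ) : Fin 2 →₀ ℕ := Finsupp.single 0 a + Finsupp.single 1 b

@[simp] lemma mexp_apply0 (a b : ℕ) : mexp a b 0 = a := by
  simp [mexp, Finsupp.single_apply]

@[simp] lemma mexp_apply1 (a b : ℕ) : mexp a b 1 = b := by
  simp [mexp, Finsupp.single_apply]

lemma eq_mexp (m : Fin 2 →₀ ℕ) : m = mexp (m 0) (m 1) := by
  ext i
  fin_cases i <;> simp

lemma mexp_inj {a b c d : ℕ} (h : mexp a b = mexp c d) : a = c ∧ b = d := by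
  constructor
  · have := congrArg (fun f => f 0) h; simpa using this
  · have := congrArg (fun f => f 1) h; simpa using this

lemma degree_eq (m : Fin 2 →₀ ℕ) : m.degree = m 0 + m 1 := by
  rw [Finsupp.degree, ← Fin.sum_univ_two (f := fun i => m i)]
  apply Finset.sum_subset (Finset.subset_univ _)
  intro i _ hi
  simpa using Finsupp.notMem_support_iff.mp hi

lemma CXX_eq_monomial (c : ℂ) (a b : ℕ) :
    (C c * X 0 ^ a * X 1 ^ b : P2) = monomial (mexp a b) c := by
  rw [X_pow_eq_monomial, X_pow_eq_monomial, C_apply, monomial_mul, monomial_mul, mexp]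
  simp

lemma coeff_CXX (c : ℂ) (a b : ℕ) (m : Fin 2 →₀ ℕ) :
    coeff m (C c * X 0 ^ a * X 1 ^ b : P2) = if mexp a b = m then c else 0 := by
  rw [CXX_eq_monomial, coeff_monomial]

lemma homog_rep {p : P2} {n : ℕ} (hp : p.IsHomogeneous n) :
    p = ∑ k ∈ Finset.range (n + 1), C (coeff (mexp k (n - k)) p) * X 0 ^ k * X 1 ^ (n - k) := by
  apply MvPolynomial.ext
  intro m
  rw [MvPolynomial.coeff_sum]
  simp only [coeff_CXX]
  by_cases h : m 0 + m 1 = n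
  · have hm0 : m 0 ∈ Finset.range (n + 1) := by
      rw [Finset.mem_range]; omega
    rw [Finset.sum_eq_single (m 0)]
    · have hme : mexp (m 0) (n - m 0) = m := by
        conv_rhs => rw [eq_mexp m]
        congr 1
        omega
      rw [if_pos hme, hme]
    · intro k _ hk
      rw [if_neg]
      intro hc
      apply hk
      have := congrArg (fun f => f 0) hc
      simpa using this
    · intro hm; exact absurd hm0 hm
  · have hc0 : coeff m p = 0 := by
      apply hp.coeff_eq_zero
      rw [degree_eq]
      exact h
    rw [hc0]
    symm
    apply Finset.sum_eq_zero
    intro k hk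
    rw [if_neg]
    intro hc
    have h0 := congrArg (fun f => f 0) hc
    have h1 := congrArg (fun f => f 1) hc
    simp only [mexp_apply0, mexp_apply1] at h0 h1
    rw [Finset.mem_range] at hk
    omega

lemma coeff_form (a : ℕ → ℂ) {j : ℕ} (hj : j ∈ Finset.range 7) :
    coeff (mexp j (6 - j)) (∑ k ∈ Finset.range 7, C (a k) * X 0 ^ k * X 1 ^ (6 - k) : P2)
      = a j := by
  rw [MvPolynomial.coeff_sum]
  simp only [coeff_CXX]
  rw [Finset.sum_eq_single j]
  · rw [if_pos rfl]
  · intro k _ hk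
    rw [if_neg]
    intro hc
    exact hk (mexp_inj hc).1
  · intro hm; exact absurd hj hm

lemma isHomogeneous_linear (P : Matrix (Fin 2) (Fin 2) ℂ) (i : Fin 2) :
    (∑ j : Fin 2, C (P i j) * X j : P2).IsHomogeneous 1 :=
  IsHomogeneous.sum _ _ _ fun j _ => isHomogeneous_C_mul_X _ _

lemma coeff_single_linear (P : Matrix (Fin 2) (Fin 2) ℂ) (i k : Fin 2) :
    coeff (Finsupp.single k 1) (∑ j : Fin 2, C (P i j) * X j : P2) = P i k := by
  rw [Fin.sum_univ_two, coeff_add, coeff_C_mul, coeff_C_mul]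
  fin_cases k <;>
    simp [MvPolynomial.coeff_X', Finsupp.single_eq_single_iff]

lemma linIndep_of_det (P : Matrix (Fin 2) (Fin 2) ℂ) (hP : P.det ≠ 0) :
    LinearIndependent ℂ
      ![(∑ j : Fin 2, C (P 0 j) * X j : P2), ∑ j : Fin 2, C (P 1 j) * X j] := by
  rw [LinearIndependent.pair_iff]
  intro a b hab
  have key : ∀ k : Fin 2, a * P 0 k + b * P 1 k = 0 := by
    intro k
    have := congrArg (coeff (Finsupp.single k 1)) hab
    rw [coeff_add, MvPolynomial.coeff_smul, MvPolynomial.coeff_smul,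
      coeff_single_linear, coeff_single_linear] at this
    simpa [smul_eq_mul] using this
  have h0 := key 0
  have h1 := key 1
  rw [Matrix.det_fin_two] at hP
  constructor
  · have ha : a * (P 0 0 * P 1 1 - P 0 1 * P 1 0) = 0 := by
      linear_combination P 1 1 * h0 - P 1 0 * h1
    exact (mul_eq_zero.mp ha).resolve_right hP
  · have hb : b * (P 0 0 * P 1 1 - P 0 1 * P 1 0) = 0 := by
      linear_combination -P 0 1 * h0 + P 0 0 * h1
    exact (mul_eq_zero.mp hb).resolve_right hP

lemma not_isUnit_X (i : Fin 2) : ¬ IsUnit (X i : P2) := by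
  intro h
  have h2 := h.map (MvPolynomial.eval (fun _ => (0 : ℂ)))
  simp only [eval_X] at h2
  exact h2.ne_zero rfl

lemma squarefree_subst {G : P2} (hsf : Squarefree G) (N : Matrix (Fin 2) (Fin 2) ℂ)
    (hN : IsUnit N.det) : Squarefree (subst N G) := by
  intro x hx
  obtain ⟨y, hy⟩ := hx
  have hdvd : subst N⁻¹ x * subst N⁻¹ x ∣ G := by
    refine ⟨subst N⁻¹ y, ?_⟩
    have := congrArg (subst N⁻¹) hy
    rw [subst_subst, Matrix.mul_nonsing_inv _ hN, subst_one] at this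
    rw [this, _root_.map_mul, _root_.map_mul]
  have hu := hsf _ hdvd
  rw [isUnit_iff_exists_inv] at hu ⊢
  obtain ⟨z, hz⟩ := hu
  refine ⟨subst N z, ?_⟩
  have := congrArg (subst N) hz
  rw [_root_.map_mul, _root_.map_one, subst_subst, Matrix.nonsing_inv_mul _ hN, subst_one] at this
  exact this

/-- Final conversion: an even form for `subst N G` yields the conclusion. -/
lemma fin_lemma (G : P2) (N : Matrix (Fin 2) (Fin 2) ℂ) (hN : IsUnit N.det)
    (c₁ c₂ c₃ c₄ : ℂ)
    (h : subst N G = C c₁ * X 0 ^ 6 + C c₂ * X 0 ^ 4 * X 1 ^ 2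
        + C c₃ * X 0 ^ 2 * X 1 ^ 4 + C c₄ * X 1 ^ 6) :
    ∃ (u₁ u₂ : P2) (c₁ c₂ c₃ c₄ : ℂ),
        u₁.IsHomogeneous 1 ∧ u₂.IsHomogeneous 1 ∧
        LinearIndependent ℂ ![u₁, u₂] ∧
        G = C c₁ * u₁ ^ 6 + C c₂ * u₁ ^ 4 * u₂ ^ 2
          + C c₃ * u₁ ^ 2 * u₂ ^ 4 + C c₄ * u₂ ^ 6 := by
  have hNi : IsUnit N⁻¹.det := N.isUnit_nonsing_inv_det hN
  refine ⟨∑ j : Fin 2, C (N⁻¹ 0 j) * X j, ∑ j : Fin 2, C (N⁻¹ 1 j) * X j,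
    c₁, c₂, c₃, c₄, isHomogeneous_linear _ _, isHomogeneous_linear _ _,
    linIndep_of_det _ (fun h0 => by rw [h0] at hNi; simp at hNi), ?_⟩
  have hG : G = subst N⁻¹ (subst N G) := by
    rw [subst_subst, Matrix.mul_nonsing_inv _ hN, subst_one]
  rw [hG, h]
  simp only [map_add, _root_.map_mul, map_pow, subst_C, subst_X]

lemma homog1_rep {u : P2} (hu : u.IsHomogeneous 1) :
    u = C (coeff (mexp 1 0) u) * X 0 + C (coeff (mexp 0 1) u) * X 1 := by
  have h := homog_rep hu
  rw [Finset.sum_range_succ, Finset.sum_range_succ, Finset.sum_range_zero] at h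
  simp only [zero_add, pow_zero, pow_one, one_mul, mul_one, Nat.sub_self, Nat.sub_zero] at h
  exact h.trans (add_comm _ _)

lemma easy_dir (G : P2)
    (h : ∃ (u₁ u₂ : P2) (c₁ c₂ c₃ c₄ : ℂ),
        u₁.IsHomogeneous 1 ∧ u₂.IsHomogeneous 1 ∧
        LinearIndependent ℂ ![u₁, u₂] ∧
        G = C c₁ * u₁ ^ 6 + C c₂ * u₁ ^ 4 * u₂ ^ 2
          + C c₃ * u₁ ^ 2 * u₂ ^ 4 + C c₄ * u₂ ^ 6) :
    ∃ (M : Matrix (Fin 2) (Fin 2) ℂ) (c : ℂ),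
        IsUnit M.det ∧ (∀ t : ℂ, M ≠ t • (1 : Matrix (Fin 2) (Fin 2) ℂ)) ∧
        (∃ t : ℂ, M ^ 2 = t • (1 : Matrix (Fin 2) (Fin 2) ℂ)) ∧ c ≠ 0 ∧
        subst M G = C c * G := by
  obtain ⟨u₁, u₂, c₁, c₂, c₃, c₄, h₁, h₂, hli, hG⟩ := h
  set a := coeff (mexp 1 0) u₁ with ha
  set b := coeff (mexp 0 1) u₁ with hb
  set q := coeff (mexp 1 0) u₂ with hq
  set d := coeff (mexp 0 1) u₂ with hd
  have hu₁ : u₁ = C a * X 0 + C b * X 1 := homog1_rep h₁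
  have hu₂ : u₂ = C q * X 0 + C d * X 1 := homog1_rep h₂
  rw [LinearIndependent.pair_iff] at hli
  set e := a * d - b * q with he
  have he0 : e ≠ 0 := by
    intro h0
    have hrel1 : d • u₁ + (-b) • u₂ = 0 := by
      rw [hu₁, hu₂, MvPolynomial.smul_eq_C_mul, MvPolynomial.smul_eq_C_mul]
      have hC : C (a * d - b * q) = (C 0 : P2) := by rw [← h0]
      rw [map_sub, _root_.map_mul, _root_.map_mul, map_zero] at hC
      rw [map_neg]
      linear_combination (X 0 : P2) * hC
    have hrel2 : q • u₁ + (-a) • u₂ = 0 := by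
      rw [hu₁, hu₂, MvPolynomial.smul_eq_C_mul, MvPolynomial.smul_eq_C_mul]
      have hC : C (a * d - b * q) = (C 0 : P2) := by rw [← h0]
      rw [map_sub, _root_.map_mul, _root_.map_mul, map_zero] at hC
      rw [map_neg]
      linear_combination (-(X 1 : P2)) * hC
    obtain ⟨hd0, hb0⟩ := hli d (-b) hrel1
    obtain ⟨hq0, ha0⟩ := hli q (-a) hrel2
    rw [neg_eq_zero] at ha0 hb0
    have hu10 : u₁ = 0 := by
      rw [hu₁, ha0, hb0]
      simp
    have := hli 1 0 (by rw [hu10]; simp)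
    exact one_ne_zero this.1
  set M : Matrix (Fin 2) (Fin 2) ℂ :=
    !![(a * d + b * q) / e, 2 * b * d / e; -(2 * a * q) / e, -((a * d + b * q) / e)] with hM
  have hdet : M.det = -1 := by
    rw [hM, Matrix.det_fin_two_of]
    field_simp
    ring
  have hs1 : subst M u₁ = u₁ := by
    rw [hu₁, map_add, _root_.map_mul, _root_.map_mul, subst_C, subst_C, subst_X, subst_X,
      Fin.sum_univ_two, Fin.sum_univ_two]
    have m00 : M 0 0 = (a * d + b * q) / e := by rw [hM]; rfl
    have m01 : M 0 1 = 2 * b * d / e := by rw [hM]; rfl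
    have m10 : M 1 0 = -(2 * a * q) / e := by rw [hM]; rfl
    have m11 : M 1 1 = -((a * d + b * q) / e) := by rw [hM]; rfl
    rw [m00, m01, m10, m11]
    have k0 : a * ((a * d + b * q) / e) + b * (-(2 * a * q) / e) = a := by
      field_simp
      ring
    have k1 : a * (2 * b * d / e) + b * (-((a * d + b * q) / e)) = b := by
      field_simp
      ring
    have hk0 : (C a : P2) * C ((a * d + b * q) / e) + C b * C (-(2 * a * q) / e) = C a := by
      rw [← C_mul, ← C_mul, ← C_add, k0]
    have hk1 : (C a : P2) * C (2 * b * d / e) + C b * C (-((a * d + b * q) / e)) = C b := by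
      rw [← C_mul, ← C_mul, ← C_add, k1]
    linear_combination (X 0 : P2) * hk0 + (X 1 : P2) * hk1
  have hs2 : subst M u₂ = -u₂ := by
    rw [hu₂, map_add, _root_.map_mul, _root_.map_mul, subst_C, subst_C, subst_X, subst_X,
      Fin.sum_univ_two, Fin.sum_univ_two]
    have m00 : M 0 0 = (a * d + b * q) / e := by rw [hM]; rfl
    have m01 : M 0 1 = 2 * b * d / e := by rw [hM]; rfl
    have m10 : M 1 0 = -(2 * a * q) / e := by rw [hM]; rfl
    have m11 : M 1 1 = -((a * d + b * q) / e) := by rw [hM]; rfl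
    rw [m00, m01, m10, m11]
    have k0 : q * ((a * d + b * q) / e) + d * (-(2 * a * q) / e) = -q := by
      field_simp
      ring
    have k1 : q * (2 * b * d / e) + d * (-((a * d + b * q) / e)) = -d := by
      field_simp
      ring
    have hk0 : (C q : P2) * C ((a * d + b * q) / e) + C d * C (-(2 * a * q) / e) = C (-q) := by
      rw [← C_mul, ← C_mul, ← C_add, k0]
    have hk1 : (C q : P2) * C (2 * b * d / e) + C d * C (-((a * d + b * q) / e)) = C (-d) := by
      rw [← C_mul, ← C_mul, ← C_add, k1]
    simp only [map_neg] at hk0 hk1 ⊢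
    linear_combination (X 0 : P2) * hk0 + (X 1 : P2) * hk1
  refine ⟨M, 1, ?_, ?_, ?_, one_ne_zero, ?_⟩
  · rw [hdet]; exact isUnit_one.neg
  · intro t ht
    have e01 : M 0 1 = 0 := by rw [ht]; simp [Matrix.smul_apply, Matrix.one_apply]
    have e00 : M 0 0 = t := by rw [ht]; simp [Matrix.smul_apply, Matrix.one_apply]
    have e11 : M 1 1 = t := by rw [ht]; simp [Matrix.smul_apply, Matrix.one_apply]
    have m00 : M 0 0 = (a * d + b * q) / e := by rw [hM]; rfl
    have m01 : M 0 1 = 2 * b * d / e := by rw [hM]; rfl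
    have m11 : M 1 1 = -((a * d + b * q) / e) := by rw [hM]; rfl
    rw [m01] at e01
    rw [m00] at e00
    rw [m11] at e11
    have hbd : b * d = 0 := by
      have h2 := (div_eq_zero_iff.mp e01).resolve_right he0
      linear_combination h2 / 2
    have habq : a * d + b * q = 0 := by
      have h2 : (a * d + b * q) / e = 0 := by linear_combination (e00 - e11) / 2
      exact (div_eq_zero_iff.mp h2).resolve_right he0
    rcases mul_eq_zero.mp hbd with h5 | h5
    · exact he0 (by show a * d - b * q = 0; linear_combination habq - 2 * q * h5)
    · exact he0 (by show a * d - b * q = 0; linear_combination -habq + 2 * a * h5)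
  · refine ⟨1, ?_⟩
    rw [one_smul, pow_two]
    ext i j
    fin_cases i <;> fin_cases j <;>
      · simp [hM, Matrix.mul_apply, Fin.sum_univ_two, Matrix.one_apply]
        field_simp
        ring
  · rw [hG]
    simp only [map_add, _root_.map_mul, map_pow, subst_C, hs1, hs2]
    rw [MvPolynomial.C_1]
    ring

lemma key_identity (h5 h3 μ : ℂ) (hμ : μ ≠ 0) :
    (C h5 * X 0 ^ 5 * X 1 + C h3 * X 0 ^ 3 * X 1 ^ 3 + C (h5 * μ ^ 4) * X 0 * X 1 ^ 5 : P2)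
    = C ((2 * h5 * μ ^ 2 + h3) / (64 * μ ^ 3)) * (X 0 + C μ * X 1) ^ 6
    + C ((10 * h5 * μ ^ 2 - 3 * h3) / (64 * μ ^ 3)) * (X 0 + C μ * X 1) ^ 4
        * (X 0 - C μ * X 1) ^ 2
    + C ((-(10 * h5 * μ ^ 2) + 3 * h3) / (64 * μ ^ 3)) * (X 0 + C μ * X 1) ^ 2
        * (X 0 - C μ * X 1) ^ 4
    + C ((-(2 * h5 * μ ^ 2) - h3) / (64 * μ ^ 3)) * (X 0 - C μ * X 1) ^ 6 := by
  have hK : (C (64 * μ ^ 3) : P2) ≠ 0 := by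
    rw [Ne, MvPolynomial.C_eq_zero]
    exact mul_ne_zero (by norm_num) (pow_ne_zero _ hμ)
  apply mul_left_cancel₀ hK
  have e1 : (64 * μ ^ 3) * ((2 * h5 * μ ^ 2 + h3) / (64 * μ ^ 3)) = 2 * h5 * μ ^ 2 + h3 := by
    field_simp
  have e2 : (64 * μ ^ 3) * ((10 * h5 * μ ^ 2 - 3 * h3) / (64 * μ ^ 3))
      = 10 * h5 * μ ^ 2 - 3 * h3 := by field_simp
  have e3 : (64 * μ ^ 3) * ((-(10 * h5 * μ ^ 2) + 3 * h3) / (64 * μ ^ 3))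
      = -(10 * h5 * μ ^ 2) + 3 * h3 := by field_simp
  have e4 : (64 * μ ^ 3) * ((-(2 * h5 * μ ^ 2) - h3) / (64 * μ ^ 3))
      = -(2 * h5 * μ ^ 2) - h3 := by field_simp
  simp only [mul_add, ← mul_assoc, ← C_mul]
  rw [e1, e2, e3, e4]
  simp only [C_mul, C_add, C_sub, C_neg, C_pow, map_ofNat]
  ring

lemma fin2_cases : ∀ i : Fin 2, i = 0 ∨ i = 1 := by decide

lemma hard_dir (G : P2) (hhom : G.IsHomogeneous 6) (hsf : Squarefree G)
    (M : Matrix (Fin 2) (Fin 2) ℂ) (c : ℂ) (hMdet : IsUnit M.det)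
    (hMns : ∀ t : ℂ, M ≠ t • (1 : Matrix (Fin 2) (Fin 2) ℂ))
    (hM2 : ∃ t : ℂ, M ^ 2 = t • (1 : Matrix (Fin 2) (Fin 2) ℂ))
    (hsub : subst M G = C c * G) :
    ∃ (u₁ u₂ : P2) (c₁ c₂ c₃ c₄ : ℂ),
        u₁.IsHomogeneous 1 ∧ u₂.IsHomogeneous 1 ∧
        LinearIndependent ℂ ![u₁, u₂] ∧
        G = C c₁ * u₁ ^ 6 + C c₂ * u₁ ^ 4 * u₂ ^ 2
          + C c₃ * u₁ ^ 2 * u₂ ^ 4 + C c₄ * u₂ ^ 6 := by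
  classical
  obtain ⟨t, ht⟩ := hM2
  -- t ≠ 0
  have ht0 : t ≠ 0 := by
    intro h0
    rw [h0, zero_smul] at ht
    have hd : M.det ^ 2 = 0 := by
      rw [← Matrix.det_pow, ht]
      exact Matrix.det_zero
    exact hMdet.ne_zero ((pow_eq_zero_iff two_ne_zero).mp hd)
  obtain ⟨s, hs⟩ := IsAlgClosed.exists_pow_nat_eq (k := ℂ) t (n := 2) (by norm_num)
  have hs0 : s ≠ 0 := by
    intro h0
    rw [h0] at hs
    simp at hs
    exact ht0 hs.symm
  have hMM : M * M = t • 1 := by rw [← pow_two]; exact ht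
  -- eigenrow relations
  have hPM : (M + s • 1) * M = s • (M + s • 1) := by
    rw [add_mul, Matrix.smul_mul, Matrix.one_mul, hMM, smul_add, smul_smul, ← pow_two, hs]
    abel
  have hQM : (M - s • 1) * M = (-s) • (M - s • 1) := by
    rw [sub_mul, Matrix.smul_mul, Matrix.one_mul, hMM]
    rw [neg_smul, smul_sub, smul_smul, show s * s = s ^ 2 from by ring, hs]
    abel
  -- nonzero rows
  have hPex : ∃ i j, (M + s • 1) i j ≠ 0 := by
    by_contra hcon
    push_neg at hcon
    apply hMns (-s)
    ext i j
    have h0 := hcon i j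
    simp only [Matrix.add_apply, Matrix.smul_apply, smul_eq_mul] at h0
    simp only [Matrix.smul_apply, smul_eq_mul, neg_mul]
    linear_combination h0
  have hQex : ∃ i j, (M - s • 1) i j ≠ 0 := by
    by_contra hcon
    push_neg at hcon
    apply hMns s
    ext i j
    have h0 := hcon i j
    simp only [Matrix.sub_apply, Matrix.smul_apply, smul_eq_mul] at h0
    simp only [Matrix.smul_apply, smul_eq_mul]
    linear_combination h0
  obtain ⟨i₀, j₀, hpj₀⟩ := hPex
  obtain ⟨i₁, j₁, hqj₁⟩ := hQex
  set p : Fin 2 → ℂ := fun j => (M + s • 1) i₀ j with hp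
  set q : Fin 2 → ℂ := fun j => (M - s • 1) i₁ j with hq
  have hpeig : ∀ j, p 0 * M 0 j + p 1 * M 1 j = s * p j := by
    intro j
    have h0 := congrFun (congrFun hPM i₀) j
    rw [Matrix.mul_apply, Fin.sum_univ_two, Matrix.smul_apply, smul_eq_mul] at h0
    exact h0
  have hqeig : ∀ j, q 0 * M 0 j + q 1 * M 1 j = -s * q j := by
    intro j
    have h0 := congrFun (congrFun hQM i₁) j
    rw [Matrix.mul_apply, Fin.sum_univ_two, Matrix.smul_apply, smul_eq_mul] at h0
    exact h0
  -- determinant nonzero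
  have hdetpq : p 0 * q 1 - p 1 * q 0 ≠ 0 := by
    intro hd
    have hr0 : q j₀ * p 0 - p j₀ * q 0 = 0 := by
      rcases fin2_cases j₀ with rfl | rfl
      · ring
      · linear_combination hd
    have hr1 : q j₀ * p 1 - p j₀ * q 1 = 0 := by
      rcases fin2_cases j₀ with rfl | rfl
      · linear_combination -hd
      · ring
    have hcomb : ∀ j, q j₀ * p j + p j₀ * q j = 0 := by
      intro j
      have e1 := hpeig j
      have e2 := hqeig j
      have hz : s * (q j₀ * p j + p j₀ * q j) = 0 := by
        linear_combination (-(q j₀)) * e1 + p j₀ * e2 + M 0 j * hr0 + M 1 j * hr1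
      exact (mul_eq_zero.mp hz).resolve_left hs0
    have hqj₀0 : q j₀ = 0 := by
      have h2 : p j₀ * q j₀ = 0 := by linear_combination (hcomb j₀) / 2
      exact (mul_eq_zero.mp h2).resolve_left hpj₀
    have hqall : ∀ j, q j = 0 := by
      intro j
      have h2 := hcomb j
      rw [hqj₀0] at h2
      have h3 : p j₀ * q j = 0 := by linear_combination h2
      exact (mul_eq_zero.mp h3).resolve_left hpj₀
    exact hqj₁ (hqall j₁)
  set A : Matrix (Fin 2) (Fin 2) ℂ := !![p 0, p 1; q 0, q 1] with hA
  have hdetA : A.det ≠ 0 := by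
    rw [hA, Matrix.det_fin_two_of]
    exact hdetpq
  have hAu : IsUnit A.det := isUnit_iff_ne_zero.mpr hdetA
  set D : Matrix (Fin 2) (Fin 2) ℂ := !![s, 0; 0, -s] with hD
  have hAM : A * M = D * A := by
    have e0 := hpeig 0
    have e1 := hpeig 1
    have f0 := hqeig 0
    have f1 := hqeig 1
    ext i j
    rw [Matrix.mul_apply, Matrix.mul_apply, Fin.sum_univ_two, Fin.sum_univ_two]
    rcases fin2_cases i with rfl | rfl <;> rcases fin2_cases j with rfl | rfl <;>
      simp [hA, hD] <;>
      first
        | linear_combination e0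
        | linear_combination e1
        | linear_combination f0
        | linear_combination f1
  -- pass to H
  have hAiu : IsUnit A⁻¹.det := A.isUnit_nonsing_inv_det hAu
  set H : P2 := subst A⁻¹ G with hHdef
  have hHhom : H.IsHomogeneous 6 := subst_isHomogeneous _ hhom
  have hHsf : Squarefree H := squarefree_subst hsf _ hAiu
  have hMAi : M * A⁻¹ = A⁻¹ * D := by
    calc M * A⁻¹ = (A⁻¹ * A) * (M * A⁻¹) := by
          rw [Matrix.nonsing_inv_mul _ hAu, Matrix.one_mul]
      _ = A⁻¹ * (A * M) * A⁻¹ := by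
          rw [Matrix.mul_assoc, Matrix.mul_assoc, Matrix.mul_assoc]
      _ = A⁻¹ * (D * A) * A⁻¹ := by rw [hAM]
      _ = A⁻¹ * D * (A * A⁻¹) := by
          rw [Matrix.mul_assoc, Matrix.mul_assoc, Matrix.mul_assoc]
      _ = A⁻¹ * D := by rw [Matrix.mul_nonsing_inv _ hAu, Matrix.mul_one]
  have hDH : subst D H = C c * H := by
    rw [hHdef, subst_subst, ← hMAi, ← subst_subst, hsub, _root_.map_mul, subst_C]
  -- coefficient analysis
  set h : ℕ → ℂ := fun k => coeff (mexp k (6 - k)) H with hh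
  have hexp : H = ∑ k ∈ Finset.range 7, C (h k) * X 0 ^ k * X 1 ^ (6 - k) := homog_rep hHhom
  have hDX0 : subst D (X 0) = C s * X 0 := by
    rw [subst_X, Fin.sum_univ_two, show D 0 0 = s from rfl, show D 0 1 = 0 from rfl]
    simp
  have hDX1 : subst D (X 1) = C (-s) * X 1 := by
    rw [subst_X, Fin.sum_univ_two, show D 1 0 = 0 from rfl, show D 1 1 = -s from rfl]
    simp
  have hsubD : subst D H
      = ∑ k ∈ Finset.range 7, C (s ^ k * (-s) ^ (6 - k) * h k) * X 0 ^ k * X 1 ^ (6 - k) := by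
    conv_lhs => rw [hexp]
    rw [map_sum]
    refine Finset.sum_congr rfl fun k _ => ?_
    rw [_root_.map_mul, _root_.map_mul, map_pow, map_pow, subst_C, hDX0, hDX1]
    rw [mul_pow, mul_pow, ← C_pow, ← C_pow]
    simp only [C_mul, C_pow]
    ring
  have hCcH : C c * H
      = ∑ k ∈ Finset.range 7, C (c * h k) * X 0 ^ k * X 1 ^ (6 - k) := by
    conv_lhs => rw [hexp]
    rw [Finset.mul_sum]
    refine Finset.sum_congr rfl fun k _ => ?_
    rw [C_mul]
    ring
  rw [hsubD, hCcH] at hDH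
  have heq : ∀ k ∈ Finset.range 7, s ^ k * (-s) ^ (6 - k) * h k = c * h k := by
    intro k hk
    have h0 := congrArg (coeff (mexp k (6 - k))) hDH
    rw [coeff_form _ hk, coeff_form _ hk] at h0
    exact h0
  have hsign : ∀ k ∈ Finset.range 7, h k ≠ 0 → (-1 : ℂ) ^ k * s ^ 6 = c := by
    intro k hk hne
    have h0 := heq k hk
    rw [Finset.mem_range] at hk
    have hpw : s ^ k * (-s) ^ (6 - k) = (-1 : ℂ) ^ k * s ^ 6 := by
      have h3 : Even (6 - k) ↔ Even k := by
        rw [Nat.even_sub (by omega : k ≤ 6)]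
        have h6 : Even 6 := ⟨3, rfl⟩
        tauto
      have h2 : (-1 : ℂ) ^ (6 - k) = (-1) ^ k := by
        rcases Nat.even_or_odd k with he | ho
        · rw [he.neg_one_pow, (h3.mpr he).neg_one_pow]
        · rw [ho.neg_one_pow, (Nat.not_even_iff_odd.mp
            (fun hc => (Nat.not_odd_iff_even.mpr (h3.mp hc)) ho)).neg_one_pow]
      calc s ^ k * (-s) ^ (6 - k) = (-1 : ℂ) ^ (6 - k) * (s ^ k * s ^ (6 - k)) := by
            rw [neg_pow]; ring
        _ = (-1 : ℂ) ^ k * s ^ 6 := by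
            rw [h2, ← pow_add, show k + (6 - k) = 6 from by omega]
    rw [hpw] at h0
    exact mul_right_cancel₀ hne h0
  have hs6 : (s : ℂ) ^ 6 ≠ 0 := pow_ne_zero _ hs0
  by_cases hcs : c = s ^ 6
  · -- even case
    have hzero : ∀ k ∈ Finset.range 7, Odd k → h k = 0 := by
      intro k hk hko
      by_contra hne
      have h0 := hsign k hk hne
      rw [hko.neg_one_pow, hcs] at h0
      apply hs6
      linear_combination -h0 / 2
    have h1z := hzero 1 (by norm_num) ⟨0, by norm_num⟩
    have h3z := hzero 3 (by norm_num) ⟨1, by norm_num⟩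
    have h5z := hzero 5 (by norm_num) ⟨2, by norm_num⟩
    have hHeven : subst A⁻¹ G = C (h 6) * X 0 ^ 6 + C (h 4) * X 0 ^ 4 * X 1 ^ 2
        + C (h 2) * X 0 ^ 2 * X 1 ^ 4 + C (h 0) * X 1 ^ 6 := by
      rw [← hHdef, hexp]
      simp only [Finset.sum_range_succ, Finset.sum_range_zero]
      rw [h1z, h3z, h5z]
      norm_num
      ring
    exact fin_lemma G A⁻¹ hAiu (h 6) (h 4) (h 2) (h 0) hHeven
  · -- odd case
    have hzero : ∀ k ∈ Finset.range 7, Even k → h k = 0 := by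
      intro k hk hke
      by_contra hne
      have h0 := hsign k hk hne
      rw [hke.neg_one_pow, one_mul] at h0
      exact hcs h0.symm
    have h0z := hzero 0 (by norm_num) ⟨0, by norm_num⟩
    have h2z := hzero 2 (by norm_num) ⟨1, by norm_num⟩
    have h4z := hzero 4 (by norm_num) ⟨2, by norm_num⟩
    have h6z := hzero 6 (by norm_num) ⟨3, by norm_num⟩
    have hHodd : H = C (h 5) * X 0 ^ 5 * X 1 + C (h 3) * X 0 ^ 3 * X 1 ^ 3
        + C (h 1) * X 0 * X 1 ^ 5 := by
      rw [hexp]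
      simp only [Finset.sum_range_succ, Finset.sum_range_zero]
      rw [h0z, h2z, h4z, h6z]
      norm_num
      ring
    have h5ne : h 5 ≠ 0 := by
      intro h50
      apply not_isUnit_X 1
      apply hHsf
      refine ⟨C (h 3) * X 0 ^ 3 * X 1 + C (h 1) * X 0 * X 1 ^ 3, ?_⟩
      rw [hHodd, h50]
      rw [map_zero]
      ring
    have h1ne : h 1 ≠ 0 := by
      intro h10
      apply not_isUnit_X 0
      apply hHsf
      refine ⟨C (h 5) * X 0 ^ 3 * X 1 + C (h 3) * X 0 * X 1 ^ 3, ?_⟩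
      rw [hHodd, h10]
      rw [map_zero]
      ring
    obtain ⟨μ, hμ⟩ := IsAlgClosed.exists_pow_nat_eq (k := ℂ) (h 1 / h 5) (n := 4) (by norm_num)
    have hμ0 : μ ≠ 0 := by
      intro h0
      rw [h0] at hμ
      have : h 1 / h 5 = 0 := by rw [← hμ]; ring
      exact h1ne ((div_eq_zero_iff.mp this).resolve_right h5ne)
    have hμ4 : h 5 * μ ^ 4 = h 1 := by
      rw [hμ]
      field_simp
    -- new coordinates
    set c₁' := (2 * h 5 * μ ^ 2 + h 3) / (64 * μ ^ 3) with hc₁'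
    set c₂' := (10 * h 5 * μ ^ 2 - 3 * h 3) / (64 * μ ^ 3) with hc₂'
    set c₃' := (-(10 * h 5 * μ ^ 2) + 3 * h 3) / (64 * μ ^ 3) with hc₃'
    set c₄' := (-(2 * h 5 * μ ^ 2) - h 3) / (64 * μ ^ 3) with hc₄'
    have hkey : H = C c₁' * (X 0 + C μ * X 1) ^ 6
        + C c₂' * (X 0 + C μ * X 1) ^ 4 * (X 0 - C μ * X 1) ^ 2
        + C c₃' * (X 0 + C μ * X 1) ^ 2 * (X 0 - C μ * X 1) ^ 4
        + C c₄' * (X 0 - C μ * X 1) ^ 6 := by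
      rw [hHodd, ← hμ4]
      exact key_identity (h 5) (h 3) μ hμ0
    set B : Matrix (Fin 2) (Fin 2) ℂ := !![1, μ; 1, -μ] with hB
    have hdetB : B.det ≠ 0 := by
      rw [hB, Matrix.det_fin_two_of]
      intro h0
      apply hμ0
      linear_combination -h0 / 2
    have hBu : IsUnit B.det := isUnit_iff_ne_zero.mpr hdetB
    have hBX0 : subst B (X 0) = X 0 + C μ * X 1 := by
      rw [subst_X, Fin.sum_univ_two, show B 0 0 = 1 from rfl, show B 0 1 = μ from rfl, C_1,
        one_mul]
    have hBX1 : subst B (X 1) = X 0 - C μ * X 1 := by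
      rw [subst_X, Fin.sum_univ_two, show B 1 0 = 1 from rfl, show B 1 1 = -μ from rfl, C_1,
        one_mul, map_neg]
      ring
    set E : P2 := C c₁' * X 0 ^ 6 + C c₂' * X 0 ^ 4 * X 1 ^ 2
        + C c₃' * X 0 ^ 2 * X 1 ^ 4 + C c₄' * X 1 ^ 6 with hE
    have hBE : subst B E = H := by
      rw [hE]
      simp only [map_add, _root_.map_mul, map_pow, subst_C, hBX0, hBX1]
      rw [hkey]
    have hNu : IsUnit (A⁻¹ * B⁻¹).det := by
      rw [Matrix.det_mul]
      exact hAiu.mul (B.isUnit_nonsing_inv_det hBu)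
    have hfinal : subst (A⁻¹ * B⁻¹) G = E := by
      rw [← subst_subst, ← hHdef, ← hBE, subst_subst, Matrix.mul_nonsing_inv _ hBu, subst_one]
    exact fin_lemma G (A⁻¹ * B⁻¹) hNu c₁' c₂' c₃' c₄' (by rw [hfinal, hE])


theorem involution_iff_even_form
    (G : MvPolynomial (Fin 2) ℂ) (hG : G ≠ 0)
    (hhom : G.IsHomogeneous 6) (hsf : Squarefree G) :
    (∃ (M : Matrix (Fin 2) (Fin 2) ℂ) (c : ℂ),
        IsUnit M.det ∧ (∀ t : ℂ, M ≠ t • (1 : Matrix (Fin 2) (Fin 2) ℂ)) ∧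
        (∃ t : ℂ, M ^ 2 = t • (1 : Matrix (Fin 2) (Fin 2) ℂ)) ∧ c ≠ 0 ∧
        (MvPolynomial.aeval fun i => ∑ j : Fin 2,
            MvPolynomial.C (M i j) * MvPolynomial.X j) G = MvPolynomial.C c * G) ↔
    (∃ (u₁ u₂ : MvPolynomial (Fin 2) ℂ) (c₁ c₂ c₃ c₄ : ℂ),
        u₁.IsHomogeneous 1 ∧ u₂.IsHomogeneous 1 ∧
        LinearIndependent ℂ ![u₁, u₂] ∧
        G = MvPolynomial.C c₁ * u₁ ^ 6 + MvPolynomial.C c₂ * u₁ ^ 4 * u₂ ^ 2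
          + MvPolynomial.C c₃ * u₁ ^ 2 * u₂ ^ 4 + MvPolynomial.C c₄ * u₂ ^ 6) := by
  constructor
  · rintro ⟨M, c, h1, h2, h3, _, h5⟩
    exact hard_dir G hhom hsf M c h1 h2 h3 h5
  · intro h
    obtain ⟨M, c, h1, h2, h3, h4, h5⟩ := easy_dir G h
    exact ⟨M, c, h1, h2, h3, h4, h5⟩

end

end PascalStmt
end

section
/- Let A, C, D, E, F be five pairwise non-proportional points of the conic K, and let T_A = (A₂, −2A₁, A₀) be the tangent line to K at A. Then the point T_A × (C×F) (the intersection of the tangent at A with the chord CF) and the point (A×E) × (D×F) (the intersection of the chords AE and DF) are non-proportional; i.e., these two points are always distinct. -/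
open Matrix

namespace PascalStmt

noncomputable section

/-- Every nonzero point of `K` is a scalar multiple of a Veronese point. -/
lemma paramK (y : Fin 3 → ℂ) (hK : OnK y) (hy : y ≠ 0) :
    ∃ k s t : ℂ, k ≠ 0 ∧ y = k • ![s ^ 2, s * t, t ^ 2] := by
  by_cases h0 : y 0 = 0
  · have h1 : y 1 = 0 := by
      have := hK
      rw [OnK, h0, zero_mul] at this
      exact pow_eq_zero_iff (n := 2) (by norm_num) |>.mp this.symm
    have h2 : y 2 ≠ 0 := by
      intro h2
      apply hy
      funext i
      fin_cases i <;> simp [h0, h1, h2]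
    refine ⟨y 2, 0, 1, h2, ?_⟩
    funext i
    fin_cases i <;> simp [h0, h1]
  · refine ⟨(y 0)⁻¹, y 0, y 1, inv_ne_zero h0, ?_⟩
    have h2 : (y 0)⁻¹ * (y 1) ^ 2 = y 2 := by
      rw [← hK]; field_simp
    funext i
    fin_cases i <;> simp [Pi.smul_apply, smul_eq_mul]
    · field_simp
    · field_simp
    · rw [show y 2 = (y 0)⁻¹ * y 1 ^ 2 from h2.symm]

/-- Non-proportional parametrized points have nonzero parameter determinant. -/
lemma det_ne (u v : Fin 3 → ℂ) (ku kv s t s' t' : ℂ) (hku : ku ≠ 0) (hkv : kv ≠ 0)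
    (hu : u = ku • ![s ^ 2, s * t, t ^ 2]) (hv : v = kv • ![s' ^ 2, s' * t', t' ^ 2])
    (hnp : ∀ c : ℂ, u ≠ c • v) (hnp' : ∀ c : ℂ, v ≠ c • u) :
    s * t' - t * s' ≠ 0 := by
  intro hdet
  have hst : s * t' = t * s' := by linear_combination hdet
  have hv0 : v ≠ 0 := by
    have := hnp' 0
    simpa using this
  have hvne : ¬ (s' = 0 ∧ t' = 0) := by
    rintro ⟨hs', ht'⟩
    apply hv0
    rw [hv, hs', ht']
    funext i
    fin_cases i <;> simp
  have key : ∃ μ : ℂ, s = μ * s' ∧ t = μ * t' := by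
    by_cases hs' : s' = 0
    · have ht' : t' ≠ 0 := fun h => hvne ⟨hs', h⟩
      refine ⟨t / t', ?_, ?_⟩
      · rw [hs'] at hst ⊢
        have : s * t' = 0 := by rw [hst]; ring
        rcases mul_eq_zero.mp this with h | h
        · simp [h, hs']
        · exact absurd h ht'
      · field_simp
    · refine ⟨s / s', ?_, ?_⟩
      · field_simp
      · field_simp
        linear_combination -hst
  obtain ⟨μ, hs, ht⟩ := key
  apply hnp (ku * μ ^ 2 * kv⁻¹)
  rw [hu, hv]
  funext i
  subst hs; subst ht
  fin_cases i <;>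
    simp only [Fin.zero_eta, Fin.mk_one, Fin.reduceFinMk, Matrix.cons_val, Pi.smul_apply, smul_eq_mul, Matrix.cons_val_zero, Matrix.cons_val_one,
      Matrix.head_cons, Matrix.cons_val_two, Matrix.tail_cons] <;>
    field_simp <;> ring

set_option maxHeartbeats 1000000 in
/-- The key polynomial identity behind the theorem. -/
lemma key_identity_s19 (kA kC kD kE kF a b c d e f g h i j : ℂ) :
    ((tangentK (kA • ![a ^ 2, a * b, b ^ 2]) ⨯₃
        ((kC • ![c ^ 2, c * d, d ^ 2]) ⨯₃ (kF • ![i ^ 2, i * j, j ^ 2]))) ⨯₃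
      (((kA • ![a ^ 2, a * b, b ^ 2]) ⨯₃ (kE • ![g ^ 2, g * h, h ^ 2])) ⨯₃
        ((kD • ![e ^ 2, e * f, f ^ 2]) ⨯₃ (kF • ![i ^ 2, i * j, j ^ 2])))) ⬝ᵥ
      (kC • ![c ^ 2, c * d, d ^ 2]) =
    kA ^ 2 * kC ^ 2 * kD * kE * kF ^ 2 *
      ((c * j - d * i) * (a * h - b * g) * (e * j - f * i) * (a * j - b * i) *
        (a * d - b * c) ^ 2 * (c * f - d * e) * (g * j - h * i)) := by
  simp only [cross_apply, tangentK, vec3_dotProduct, Pi.smul_apply, smul_eq_mul,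
    Matrix.cons_val_zero, Matrix.cons_val_one, Matrix.head_cons, Matrix.cons_val_two,
    Matrix.tail_cons]
  ring

theorem degenerate_crosshairs_distinct
    (A C D E F : Fin 3 → ℂ)
    (hdist : ∀ i j : Fin 5, i ≠ j → ∀ c : ℂ, ![A, C, D, E, F] i ≠ c • ![A, C, D, E, F] j)
    (hKA : OnK A) (hKC : OnK C) (hKD : OnK D) (hKE : OnK E) (hKF : OnK F) :
    ∀ c : ℂ,
      tangentK A ⨯₃ (C ⨯₃ F) ≠ c • ((A ⨯₃ E) ⨯₃ (D ⨯₃ F)) ∧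
      (A ⨯₃ E) ⨯₃ (D ⨯₃ F) ≠ c • (tangentK A ⨯₃ (C ⨯₃ F)) := by
  -- nonzeroness of the points
  have hA0 : A ≠ 0 := by have := hdist 0 1 (by decide) 0; simpa using this
  have hC0 : C ≠ 0 := by have := hdist 1 0 (by decide) 0; simpa using this
  have hD0 : D ≠ 0 := by have := hdist 2 0 (by decide) 0; simpa using this
  have hE0 : E ≠ 0 := by have := hdist 3 0 (by decide) 0; simpa using this
  have hF0 : F ≠ 0 := by have := hdist 4 0 (by decide) 0; simpa using this
  obtain ⟨kA, a, b, hkA, hApar⟩ := paramK A hKA hA0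
  obtain ⟨kC, c', d', hkC, hCpar⟩ := paramK C hKC hC0
  obtain ⟨kD, e', f', hkD, hDpar⟩ := paramK D hKD hD0
  obtain ⟨kE, g', h', hkE, hEpar⟩ := paramK E hKE hE0
  obtain ⟨kF, i', j', hkF, hFpar⟩ := paramK F hKF hF0
  -- the seven determinant factors are nonzero
  have dAC : a * d' - b * c' ≠ 0 := det_ne A C kA kC a b c' d' hkA hkC hApar hCpar
    (by have := hdist 0 1 (by decide); simpa using this)
    (by have := hdist 1 0 (by decide); simpa using this)
  have dAE : a * h' - b * g' ≠ 0 := det_ne A E kA kE a b g' h' hkA hkE hApar hEpar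
    (by have := hdist 0 3 (by decide); simpa using this)
    (by have := hdist 3 0 (by decide); simpa using this)
  have dAF : a * j' - b * i' ≠ 0 := det_ne A F kA kF a b i' j' hkA hkF hApar hFpar
    (by have := hdist 0 4 (by decide); simpa using this)
    (by have := hdist 4 0 (by decide); simpa using this)
  have dCD : c' * f' - d' * e' ≠ 0 := det_ne C D kC kD c' d' e' f' hkC hkD hCpar hDpar
    (by have := hdist 1 2 (by decide); simpa using this)
    (by have := hdist 2 1 (by decide); simpa using this)
  have dCF : c' * j' - d' * i' ≠ 0 := det_ne C F kC kF c' d' i' j' hkC hkF hCpar hFpar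
    (by have := hdist 1 4 (by decide); simpa using this)
    (by have := hdist 4 1 (by decide); simpa using this)
  have dDF : e' * j' - f' * i' ≠ 0 := det_ne D F kD kF e' f' i' j' hkD hkF hDpar hFpar
    (by have := hdist 2 4 (by decide); simpa using this)
    (by have := hdist 4 2 (by decide); simpa using this)
  have dEF : g' * j' - h' * i' ≠ 0 := det_ne E F kE kF g' h' i' j' hkE hkF hEpar hFpar
    (by have := hdist 3 4 (by decide); simpa using this)
    (by have := hdist 4 3 (by decide); simpa using this)
  -- the cross product of the two crosshair points is nonzero
  have hZ : (tangentK A ⨯₃ (C ⨯₃ F)) ⨯₃ ((A ⨯₃ E) ⨯₃ (D ⨯₃ F)) ≠ 0 := by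
    intro hzero
    have hdot : ((tangentK A ⨯₃ (C ⨯₃ F)) ⨯₃ ((A ⨯₃ E) ⨯₃ (D ⨯₃ F))) ⬝ᵥ C = 0 := by
      rw [hzero]; simp
    rw [hApar, hCpar, hDpar, hEpar, hFpar, key_identity_s19] at hdot
    have : kA ^ 2 * kC ^ 2 * kD * kE * kF ^ 2 *
        ((c' * j' - d' * i') * (a * h' - b * g') * (e' * j' - f' * i') * (a * j' - b * i') *
          (a * d' - b * c') ^ 2 * (c' * f' - d' * e') * (g' * j' - h' * i')) ≠ 0 := by
      exact mul_ne_zero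
        (mul_ne_zero (mul_ne_zero (mul_ne_zero (mul_ne_zero (pow_ne_zero 2 hkA)
          (pow_ne_zero 2 hkC)) hkD) hkE) (pow_ne_zero 2 hkF))
        (mul_ne_zero (mul_ne_zero (mul_ne_zero (mul_ne_zero (mul_ne_zero (mul_ne_zero dCF dAE)
          dDF) dAF) (pow_ne_zero 2 dAC)) dCD) dEF)
    exact this hdot
  intro c
  constructor
  · intro heq
    apply hZ
    rw [heq]
    have : crossProduct (c • ((A ⨯₃ E) ⨯₃ (D ⨯₃ F))) ((A ⨯₃ E) ⨯₃ (D ⨯₃ F)) =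
        c • crossProduct ((A ⨯₃ E) ⨯₃ (D ⨯₃ F)) ((A ⨯₃ E) ⨯₃ (D ⨯₃ F)) := by
      rw [_root_.map_smul]; rfl
    rw [this, cross_self, smul_zero]
  · intro heq
    apply hZ
    rw [heq, _root_.map_smul, cross_self, smul_zero]

end

end PascalStmt
end
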